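/- Let G be a finite simple graph, w a universal vertex of G, and u a vertex distinct from w. Then u is avoidable in G if and only if u is avoidable in G − w. -/

import Mathlib

/-!
Since `w` is a neighbour of `u`, it lies in `N[u] \ {x, y}` whenever `x, y ≠ w`: walks witnessing
avoidability in `G` for such pairs never visit `w`, so they already live in `G - w`. A pair
containing `w` is joined by an edge, because `w` is universal.
-/

open SimpleGraph

/-- The closed neighborhood `N[u]` of a vertex. -/
def closedNbhd {V : Type*} (G : SimpleGraph V) (u : V) : Set V :=
  insert u (G.neighborSet u)

/-- A vertex `u` is avoidable if every pair of distinct neighbors `x, y` of `u`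
lies in the same connected component of `G − (N[u] \ {x, y})`, i.e. there is a
walk from `x` to `y` all of whose vertices avoid `N[u] \ {x, y}`. -/
def Avoidable {V : Type*} (G : SimpleGraph V) (u : V) : Prop :=
  ∀ x y : V, G.Adj u x → G.Adj u y → x ≠ y →
    ∃ p : G.Walk x y, ∀ v ∈ p.support, v ∉ closedNbhd G u \ ({x, y} : Set V)

section

variable {V : Type*} {G : SimpleGraph V}

lemma mem_closedNbhd_induce {s : Set V} {u v : s} :
    v ∈ closedNbhd (G.induce s) u ↔ (v : V) ∈ closedNbhd G u := by
  simp [closedNbhd, Subtype.ext_iff]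

lemma avoidable_induce_iff {s : Set V} {u : s} :
    Avoidable (G.induce s) u ↔ ∀ x y : s, G.Adj u x → G.Adj u y → x ≠ y →
      ∃ p : G.Walk x y, ∀ v ∈ p.support,
        v ∈ s ∧ v ∉ closedNbhd G u \ ({(x : V), (y : V)} : Set V) := by
  have mem_pair {x y v : s} :
      v ∈ ({x, y} : Set s) ↔ (v : V) ∈ ({(x : V), (y : V)} : Set V) := by
    simp [Subtype.ext_iff]
  refine forall₄_congr fun x y _ _ => ⟨fun h hxy => ?_, fun h hxy => ?_⟩
  · obtain ⟨q, hq⟩ := h hxy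
    refine ⟨q.map (Embedding.induce s).toHom, fun v hv => ?_⟩
    obtain ⟨v, hvq, rfl⟩ :=
      List.mem_map.mp <| (Walk.support_map _ q).subst (motive := (v ∈ ·)) hv
    refine ⟨v.2, fun ⟨hvN, hvxy⟩ => hq v hvq ⟨?_, ?_⟩⟩
    · exact mem_closedNbhd_induce.mpr hvN
    · exact fun hv => hvxy (mem_pair.mp hv)
  · obtain ⟨p, hp⟩ := h hxy
    refine ⟨p.induce s fun v hv => (hp v hv).1, fun v hv ⟨hvN, hvxy⟩ => ?_⟩
    rw [Walk.support_induce, List.mem_attachWith] at hv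
    exact (hp v hv).2 ⟨mem_closedNbhd_induce.mp hvN, fun h => hvxy (mem_pair.mpr h)⟩

lemma exists_walk_avoiding_of_adj {x y : V} (hxy : G.Adj x y) (S : Set V) :
    ∃ p : G.Walk x y, ∀ v ∈ p.support, v ∉ S \ ({x, y} : Set V) := by
  refine ⟨hxy.toWalk, fun v hv ⟨_, hvxy⟩ => hvxy ?_⟩
  simpa using hv

end

theorem avoidable_iff_avoidable_delete_universal_general {V : Type*}
    (G : SimpleGraph V) (w : V) (hw : ∀ v : V, v ≠ w → G.Adj w v)
    (u : V) (hu : u ≠ w) :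
    Avoidable G u ↔ Avoidable (G.induce {v | v ≠ w}) ⟨u, hu⟩ := by
  rw [avoidable_induce_iff]
  constructor
  · intro h x y hx hy hxy
    obtain ⟨p, hp⟩ := h x y hx hy (Subtype.coe_injective.ne hxy)
    have hw_mem : w ∈ closedNbhd G u \ ({(x : V), (y : V)} : Set V) :=
      ⟨Or.inr (hw u hu).symm, by simp [Ne.symm x.2, Ne.symm y.2]⟩
    exact ⟨p, fun v hv => ⟨fun hvw => hp v hv (hvw ▸ hw_mem), hp v hv⟩⟩
  · intro h x y hx hy hxy
    by_cases hxw : x = w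
    · exact exists_walk_avoiding_of_adj (hxw ▸ hw y (hxw ▸ hxy.symm)) _
    by_cases hyw : y = w
    · exact exists_walk_avoiding_of_adj (hyw ▸ (hw x (hyw ▸ hxy)).symm) _
    obtain ⟨p, hp⟩ := h ⟨x, hxw⟩ ⟨y, hyw⟩ hx hy (by simpa using hxy)
    exact ⟨p, fun v hv => (hp v hv).2⟩

theorem avoidable_iff_avoidable_delete_universal {V : Type*} [Fintype V]
    (G : SimpleGraph V) (w : V) (hw : ∀ v : V, v ≠ w → G.Adj w v)
    (u : V) (hu : u ≠ w) :
    Avoidable G u ↔ Avoidable (G.induce {v | v ≠ w}) ⟨u, hu⟩ :=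
  avoidable_iff_avoidable_delete_universal_general G w hw u hu
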